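/- Let A, B, C be n×n matrices over the nonnegative reals with Tr(C) ≤ 1, and let α, β > 0 satisfy α ≥ max(λ, σ) and β ≥ max(μ, θ, G(α)). Then the set of positive vectors x satisfying f_A(x) ≤ α, f_B(x) ≤ β and C ⊗ x ≤ x equals { (α^{-1}A ⊕ β^{-1}B ⊕ C)* ⊗ u : u a positive vector }. -/

import Mathlib

open scoped NNReal

/-- Square matrices over the max-times semifield of nonnegative reals. -/
abbrev TMat (n : ℕ) := Matrix (Fin n) (Fin n) ℝ≥0

/-- Tropical (max-times) matrix product. -/
noncomputable def tmul {n : ℕ} (A B : TMat n) : TMat n :=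
  fun i j => Finset.univ.sup fun k => A i k * B k j

/-- Tropical (max-times) matrix-vector product. -/
noncomputable def tmulVec {n : ℕ} (A : TMat n) (x : Fin n → ℝ≥0) : Fin n → ℝ≥0 :=
  fun i => Finset.univ.sup fun j => A i j * x j

/-- Tropical identity matrix. -/
noncomputable def tId (n : ℕ) : TMat n := fun i j => if i = j then 1 else 0

/-- Tropical matrix powers. -/
noncomputable def tpow {n : ℕ} (A : TMat n) : ℕ → TMat n
  | 0 => tId n
  | k + 1 => tmul A (tpow A k)

/-- Tropical (entrywise max) matrix addition. -/
noncomputable def tadd {n : ℕ} (A B : TMat n) : TMat n := fun i j => A i j ⊔ B i j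

/-- Entrywise scalar multiplication. -/
noncomputable def tsmul {n : ℕ} (a : ℝ≥0) (A : TMat n) : TMat n := fun i j => a * A i j

/-- Tropical trace: tr A = max_i a_{ii}. -/
noncomputable def ttr {n : ℕ} (A : TMat n) : ℝ≥0 := Finset.univ.sup fun i => A i i

/-- Tropical "determinant": Tr(A) = max_{k=1..n} tr(A^k). -/
noncomputable def tTr {n : ℕ} (A : TMat n) : ℝ≥0 :=
  (Finset.Icc 1 n).sup fun k => ttr (tpow A k)

/-- Kleene star: entrywise max of A^0, ..., A^{n-1}. -/
noncomputable def tstar {n : ℕ} (A : TMat n) : TMat n :=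
  fun i j => (Finset.range n).sup fun k => tpow A k i j

/-- Tropical product of a finite chain of matrices F 0 ⊗ F 1 ⊗ ⋯ ⊗ F (k-1). -/
noncomputable def tchain {n : ℕ} : (k : ℕ) → (Fin k → TMat n) → TMat n
  | 0, _ => tId n
  | k + 1, F => tmul (F 0) (tchain k fun t => F t.succ)

/-- Tuples of k nonnegative integers with sum m. -/
def tuples (k m : ℕ) : Finset (Fin k → Fin (m + 1)) :=
  Finset.univ.filter fun f => (∑ t, (f t : ℕ)) = m

/-- Tuples of k integers from {0,1} with sum l. -/
def binTuples (k l : ℕ) : Finset (Fin k → Fin 2) :=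
  Finset.univ.filter fun j => (∑ t, (j t : ℕ)) = l

/-- The objective f_M(x) = max_{i,j} m_{ij} x_j / x_i. -/
noncomputable def fobj {n : ℕ} (M : TMat n) (x : Fin n → ℝ≥0) : ℝ≥0 :=
  Finset.univ.sup fun p : Fin n × Fin n => M p.1 p.2 * x p.2 / x p.1

/-- Spectral radius: λ = max_{k=1..n} (tr(A^k))^{1/k}. -/
noncomputable def specRad {n : ℕ} (A : TMat n) : ℝ≥0 :=
  (Finset.Icc 1 n).sup fun k => ttr (tpow A k) ^ ((1 : ℝ) / k)

/-- σ = max over k=1..n-1, m=1..n-k and tuples (i_1,…,i_k) with sum m of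
    (tr(A^{i_1} C ⋯ A^{i_k} C))^{1/m}. -/
noncomputable def sigmaC {n : ℕ} (A C : TMat n) : ℝ≥0 :=
  (Finset.Icc 1 (n - 1)).sup fun k =>
    (Finset.Icc 1 (n - k)).sup fun m =>
      (tuples k m).sup fun f =>
        ttr (tchain k fun t => tmul (tpow A (f t : ℕ)) C) ^ ((1 : ℝ) / m)

/-- r_{k,l,m} = max over tuples (i_1,…,i_k) with sum m and (j_1,…,j_k) ∈ {0,1}^k with
    sum l of tr(A^{i_1} B^{j_1} C^{1-j_1} ⋯ A^{i_k} B^{j_k} C^{1-j_k}). -/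
noncomputable def rklm {n : ℕ} (A B C : TMat n) (k l m : ℕ) : ℝ≥0 :=
  (tuples k m).sup fun f =>
    (binTuples k l).sup fun j =>
      ttr (tchain k fun t =>
        tmul (tpow A (f t : ℕ)) (tmul (tpow B (j t : ℕ)) (tpow C (1 - (j t : ℕ)))))

/-- G(s) = max_{k,m,l} r_{k,l,m}^{1/l} s^{-m/l}. -/
noncomputable def Gfun {n : ℕ} (A B C : TMat n) (s : ℝ≥0) : ℝ≥0 :=
  (Finset.Icc 1 (n - 1)).sup fun k =>
    (Finset.Icc 1 (n - k)).sup fun m =>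
      (Finset.Icc 1 k).sup fun l =>
        rklm A B C k l m ^ ((1 : ℝ) / l) * s ^ (-(m : ℝ) / l)

/-- H(t) = max_{k,m,l} r_{k,l,m}^{1/m} t^{-l/m}. -/
noncomputable def Hfun {n : ℕ} (A B C : TMat n) (t : ℝ≥0) : ℝ≥0 :=
  (Finset.Icc 1 (n - 1)).sup fun k =>
    (Finset.Icc 1 (n - k)).sup fun m =>
      (Finset.Icc 1 k).sup fun l =>
        rklm A B C k l m ^ ((1 : ℝ) / m) * t ^ (-(l : ℝ) / m)

/-- Unconstrained r_{k,m} = max over tuples (i_1,…,i_k) with sum m of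
    tr(A^{i_1} B ⋯ A^{i_k} B). -/
noncomputable def rkm {n : ℕ} (A B : TMat n) (k m : ℕ) : ℝ≥0 :=
  (tuples k m).sup fun f => ttr (tchain k fun t => tmul (tpow A (f t : ℕ)) B)

/-- Unconstrained G(s) = max_{k,m} r_{k,m}^{1/k} s^{-m/k}. -/
noncomputable def Gfun0 {n : ℕ} (A B : TMat n) (s : ℝ≥0) : ℝ≥0 :=
  (Finset.Icc 1 (n - 1)).sup fun k =>
    (Finset.Icc 1 (n - k)).sup fun m =>
      rkm A B k m ^ ((1 : ℝ) / k) * s ^ (-(m : ℝ) / k)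

/-- Unconstrained H(t) = max_{k,m} r_{k,m}^{1/m} t^{-k/m}. -/
noncomputable def Hfun0 {n : ℕ} (A B : TMat n) (t : ℝ≥0) : ℝ≥0 :=
  (Finset.Icc 1 (n - 1)).sup fun k =>
    (Finset.Icc 1 (n - k)).sup fun m =>
      rkm A B k m ^ ((1 : ℝ) / m) * t ^ (-(k : ℝ) / m)

/-- Pareto-minimal points of a set V ⊆ ℝ≥0 × ℝ≥0. -/
def ParetoMin (V : Set (ℝ≥0 × ℝ≥0)) (p : ℝ≥0 × ℝ≥0) : Prop :=
  p ∈ V ∧ ¬∃ q ∈ V, q.1 ≤ p.1 ∧ q.2 ≤ p.2 ∧ q ≠ p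


/-!
Put `M = α⁻¹A ⊕ β⁻¹B ⊕ C`. For a positive vector `x` the three constraints say together exactly
`M ⊗ x ≤ x`. Once `Tr M ≤ 1`, i.e. every cycle of `M` has weight at most one, cutting cycles out
of walks gives `M^n ≤ M*`, hence `M ⊗ M* ≤ M*`, and the positive solutions of `M ⊗ x ≤ x` are
exactly the vectors `M* ⊗ u` with `u` positive.

To see `Tr M ≤ 1`, expand `tr M^r` into words and rotate a maximising word cyclically so that it
is a product of blocks `A^{i} B^{j} C^{1-j}`: a word with `m` letters `A` and `l` letters `B`
carries the factor `α^{-m} β^{-l}`, and the hypotheses on `λ`, `σ` and `G(α)` bound the trace of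
such a product by `α^m β^l`. Words without `A` are words of `β⁻¹B ⊕ C`, handled in the same way
with `μ` and `θ`.
-/

open Finset

section Algebra

variable {n : ℕ}

lemma le_tmul (A B : TMat n) (i j k : Fin n) : A i k * B k j ≤ tmul A B i j :=
  le_sup (f := fun k => A i k * B k j) (mem_univ k)

lemma tmul_le_iff {A B : TMat n} {i j : Fin n} {c : ℝ≥0} :
    tmul A B i j ≤ c ↔ ∀ k, A i k * B k j ≤ c := by
  simp [tmul, Finset.sup_le_iff]

lemma exists_tmul_apply_eq (A B : TMat n) (i j : Fin n) :
    ∃ k, tmul A B i j = A i k * B k j := by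
  obtain ⟨k, -, hk⟩ := exists_mem_eq_sup univ ⟨i, mem_univ i⟩ fun k => A i k * B k j
  exact ⟨k, hk⟩

lemma tmul_assoc (A B C : TMat n) : tmul (tmul A B) C = tmul A (tmul B C) := by
  funext i j
  simp only [tmul, NNReal.finset_sup_mul, NNReal.mul_finset_sup, mul_assoc]
  exact Finset.sup_comm _ _ _

lemma tmul_tId (A : TMat n) : tmul A (tId n) = A := by
  funext i j
  refine le_antisymm (tmul_le_iff.2 fun k => ?_) ?_
  · by_cases h : k = j <;> simp [tId, h]
  · simpa [tId] using le_tmul A (tId n) i j j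

lemma tId_tmul (A : TMat n) : tmul (tId n) A = A := by
  funext i j
  refine le_antisymm (tmul_le_iff.2 fun k => ?_) ?_
  · by_cases h : i = k <;> simp [tId, h]
  · simpa [tId] using le_tmul (tId n) A i j i

lemma tmul_tadd (A B C : TMat n) : tmul A (tadd B C) = tadd (tmul A B) (tmul A C) := by
  funext i j
  simp only [tmul, tadd, ← Finset.sup_sup]
  exact Finset.sup_congr rfl fun k _ => mul_max_of_nonneg _ _ zero_le

lemma tmul_tsmul (c : ℝ≥0) (A B : TMat n) : tmul A (tsmul c B) = tsmul c (tmul A B) := by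
  funext i j
  simp only [tmul, tsmul, NNReal.mul_finset_sup, mul_left_comm]

lemma tsmul_tmul (c : ℝ≥0) (A B : TMat n) : tmul (tsmul c A) B = tsmul c (tmul A B) := by
  funext i j
  simp only [tmul, tsmul, NNReal.mul_finset_sup, mul_assoc]

lemma tsmul_tsmul (a b : ℝ≥0) (A : TMat n) : tsmul a (tsmul b A) = tsmul (a * b) A := by
  funext i j
  exact (mul_assoc _ _ _).symm

lemma tadd_assoc (A B C : TMat n) : tadd (tadd A B) C = tadd A (tadd B C) := by
  funext i j
  exact sup_assoc _ _ _

lemma le_ttr (A : TMat n) (i : Fin n) : A i i ≤ ttr A :=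
  le_sup (f := fun i => A i i) (mem_univ i)

lemma ttr_le_iff {A : TMat n} {c : ℝ≥0} : ttr A ≤ c ↔ ∀ i, A i i ≤ c := by
  simp [ttr, Finset.sup_le_iff]

lemma ttr_tmul_comm (A B : TMat n) : ttr (tmul A B) = ttr (tmul B A) := by
  simp only [ttr, tmul]
  rw [Finset.sup_comm]
  simp only [mul_comm]

lemma ttr_tsmul (c : ℝ≥0) (A : TMat n) : ttr (tsmul c A) = c * ttr A := by
  simp only [ttr, tsmul, NNReal.mul_finset_sup]

lemma ttr_tpow_le_tTr (A : TMat n) {k : ℕ} (hk : k ∈ Icc 1 n) : ttr (tpow A k) ≤ tTr A :=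
  le_sup (f := fun k => ttr (tpow A k)) hk

lemma tpow_one (A : TMat n) : tpow A 1 = A := tmul_tId A

lemma tpow_add (A : TMat n) (a b : ℕ) : tpow A (a + b) = tmul (tpow A a) (tpow A b) := by
  induction a with
  | zero => rw [zero_add]; exact (tId_tmul _).symm
  | succ a ih => rw [Nat.succ_add, tpow, tpow, ih, tmul_assoc]

lemma tpow_succ' (A : TMat n) (k : ℕ) : tpow A (k + 1) = tmul (tpow A k) A := by
  rw [tpow_add, tpow_one]

lemma tpow_tsmul (c : ℝ≥0) (A : TMat n) (k : ℕ) :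
    tpow (tsmul c A) k = tsmul (c ^ k) (tpow A k) := by
  induction k with
  | zero => funext i j; simp [tpow, tsmul]
  | succ k ih =>
    rw [tpow, tpow, ih, tmul_tsmul, tsmul_tmul]
    funext i j
    simp only [tsmul, pow_succ, mul_assoc, mul_comm c]

lemma tchain_const (k : ℕ) (A : TMat n) : tchain k (fun _ => A) = tpow A k := by
  induction k with
  | zero => rfl
  | succ k ih => exact congrArg (tmul A) ih

lemma tchain_tsmul (k : ℕ) (c : Fin k → ℝ≥0) (F : Fin k → TMat n) :
    tchain k (fun t => tsmul (c t) (F t)) = tsmul (∏ t, c t) (tchain k F) := by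
  induction k with
  | zero => funext i j; simp [tchain, tsmul]
  | succ k ih =>
    rw [tchain, tchain, ih, tmul_tsmul, tsmul_tmul, Fin.prod_univ_succ]
    funext i j
    simp only [tsmul]
    ring

end Algebra

section Vec

variable {n : ℕ}

lemma le_tmulVec (A : TMat n) (x : Fin n → ℝ≥0) (i j : Fin n) : A i j * x j ≤ tmulVec A x i :=
  le_sup (f := fun j => A i j * x j) (mem_univ j)

lemma tmulVec_le_iff {A : TMat n} {x y : Fin n → ℝ≥0} :
    tmulVec A x ≤ y ↔ ∀ i j, A i j * x j ≤ y i := by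
  simp [Pi.le_def, tmulVec, Finset.sup_le_iff]

lemma tmulVec_tId (x : Fin n → ℝ≥0) : tmulVec (tId n) x = x := by
  refine le_antisymm (tmulVec_le_iff.2 fun i j => ?_) fun i => ?_
  · by_cases h : i = j <;> simp [tId, h]
  · simpa [tId] using le_tmulVec (tId n) x i i

lemma tmulVec_tmul (A B : TMat n) (x : Fin n → ℝ≥0) :
    tmulVec (tmul A B) x = tmulVec A (tmulVec B x) := by
  funext i
  simp only [tmulVec, tmul, NNReal.finset_sup_mul, NNReal.mul_finset_sup, mul_assoc]
  exact Finset.sup_comm _ _ _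

lemma tmulVec_tadd (A B : TMat n) (x : Fin n → ℝ≥0) :
    tmulVec (tadd A B) x = tmulVec A x ⊔ tmulVec B x := by
  funext i
  simp only [tmulVec, tadd, Pi.sup_apply, ← Finset.sup_sup]
  exact Finset.sup_congr rfl fun j _ => max_mul_of_nonneg _ _ zero_le

lemma tmulVec_mono {A : TMat n} {x y : Fin n → ℝ≥0} (h : x ≤ y) : tmulVec A x ≤ tmulVec A y :=
  tmulVec_le_iff.2 fun i j => (mul_le_mul_right (h j) _).trans (le_tmulVec A y i j)

lemma tmulVec_mono_left {A B : TMat n} (h : ∀ i j, A i j ≤ B i j) (x : Fin n → ℝ≥0) :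
    tmulVec A x ≤ tmulVec B x :=
  tmulVec_le_iff.2 fun i j => (mul_le_mul_left (h i j) _).trans (le_tmulVec B x i j)

lemma tmulVec_tpow_le {M : TMat n} {x : Fin n → ℝ≥0} (hx : tmulVec M x ≤ x) (k : ℕ) :
    tmulVec (tpow M k) x ≤ x := by
  induction k with
  | zero => exact (tmulVec_tId x).le
  | succ k ih => rw [tpow, tmulVec_tmul]; exact (tmulVec_mono ih).trans hx

lemma fobj_le_iff {M : TMat n} {x : Fin n → ℝ≥0} {c : ℝ≥0} (hx : ∀ i, 0 < x i) (hc : c ≠ 0) :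
    fobj M x ≤ c ↔ tmulVec (tsmul c⁻¹ M) x ≤ x := by
  simp only [fobj, Finset.sup_le_iff, mem_univ, true_implies, Prod.forall, tmulVec_le_iff,
    tsmul, div_le_iff₀ (hx _), mul_assoc, inv_mul_le_iff₀ (pos_iff_ne_zero.2 hc)]

end Vec

section KleeneStar

variable {n : ℕ} (M : TMat n)

lemma tpow_le_tstar {k : ℕ} (hk : k < n) (i j : Fin n) : tpow M k i j ≤ tstar M i j :=
  le_sup (f := fun k => tpow M k i j) (mem_range.2 hk)

lemma one_le_tstar (i : Fin n) : 1 ≤ tstar M i i := by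
  simpa [tpow, tId] using tpow_le_tstar M i.pos i i

def walkWeight (p : ℕ → Fin n) (k : ℕ) : ℝ≥0 := ∏ t ∈ range k, M (p t) (p (t + 1))

lemma walkWeight_add (p : ℕ → Fin n) (a b : ℕ) :
    walkWeight M p (a + b) = walkWeight M p a * walkWeight M (fun t => p (a + t)) b :=
  prod_range_add _ _ _

lemma walkWeight_le_tpow (p : ℕ → Fin n) (k : ℕ) : walkWeight M p k ≤ tpow M k (p 0) (p k) := by
  induction k with
  | zero => simp [walkWeight, tpow, tId]
  | succ k ih =>
    rw [walkWeight, prod_range_succ, tpow_succ']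
    exact (mul_le_mul_left ih _).trans (le_tmul _ _ _ _ _)

lemma exists_walk_of_tpow_ne_zero (k : ℕ) (i j : Fin n) (h : tpow M k i j ≠ 0) :
    ∃ p : ℕ → Fin n, p 0 = i ∧ p k = j ∧ tpow M k i j ≤ walkWeight M p k := by
  induction k generalizing j with
  | zero =>
    obtain rfl : i = j := by
      by_contra hij
      exact h (by simp [tpow, tId, hij])
    exact ⟨fun _ => i, rfl, rfl, by simp [tpow, tId, walkWeight]⟩
  | succ k ih =>
    rw [tpow_succ'] at h ⊢
    obtain ⟨q, hq⟩ := exists_tmul_apply_eq (tpow M k) M i j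
    rw [hq] at h ⊢
    obtain ⟨p, hp0, hpk, hp⟩ := ih q (left_ne_zero_of_mul h)
    refine ⟨Function.update p (k + 1) j, by simp [hp0], by simp, ?_⟩
    have hprefix : walkWeight M (Function.update p (k + 1) j) k = walkWeight M p k :=
      prod_congr rfl fun t ht => by
        have := mem_range.1 ht
        rw [Function.update_of_ne (by omega), Function.update_of_ne (by omega)]
    rw [walkWeight, prod_range_succ, ← walkWeight, hprefix, Function.update_self,
      Function.update_of_ne (by omega), hpk]
    exact mul_le_mul_left hp _

lemma exists_lt_le_apply_eq (p : ℕ → Fin n) : ∃ a b, a < b ∧ b ≤ n ∧ p a = p b := by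
  obtain ⟨x, y, hxy, h⟩ :=
    Fintype.exists_ne_map_eq_of_card_lt (fun t : Fin (n + 1) => p t) (by simp)
  rcases lt_or_gt_of_ne hxy with hlt | hlt
  · exact ⟨x, y, hlt, Nat.lt_succ_iff.1 y.isLt, h⟩
  · exact ⟨y, x, hlt, Nat.lt_succ_iff.1 x.isLt, h.symm⟩

lemma tpow_card_le_tstar (hM : tTr M ≤ 1) (i j : Fin n) : tpow M n i j ≤ tstar M i j := by
  by_cases h0 : tpow M n i j = 0
  · simp [h0]
  obtain ⟨p, rfl, rfl, hp⟩ := exists_walk_of_tpow_ne_zero M n i j h0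
  obtain ⟨a, b, hab, hbn, hpab⟩ := exists_lt_le_apply_eq p
  obtain ⟨c, rfl⟩ : ∃ c, b = a + c := ⟨b - a, by omega⟩
  obtain ⟨d, hn⟩ : ∃ d, n = a + (c + d) := ⟨n - (a + c), by omega⟩
  have hcycle : walkWeight M (fun t => p (a + t)) c ≤ 1 :=
    calc walkWeight M (fun t => p (a + t)) c ≤ tpow M c (p a) (p (a + c)) :=
          walkWeight_le_tpow M _ c
      _ ≤ ttr (tpow M c) := hpab ▸ le_ttr _ _
      _ ≤ tTr M := ttr_tpow_le_tTr M (mem_Icc.2 ⟨by omega, by omega⟩)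
      _ ≤ 1 := hM
  calc tpow M n (p 0) (p n) ≤ walkWeight M p (a + (c + d)) := hn ▸ hp
    _ = walkWeight M p a * (walkWeight M (fun t => p (a + t)) c *
          walkWeight M (fun t => p (a + (c + t))) d) := by
        rw [walkWeight_add, walkWeight_add]
    _ ≤ tpow M a (p 0) (p a) * (1 * tpow M d (p (a + c)) (p n)) := by
        gcongr
        · exact walkWeight_le_tpow M p a
        · simpa [hn] using walkWeight_le_tpow M (fun t => p (a + (c + t))) d
    _ ≤ tpow M (a + d) (p 0) (p n) := by
        rw [one_mul, ← hpab, tpow_add]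
        exact le_tmul _ _ _ _ _
    _ ≤ tstar M (p 0) (p n) := tpow_le_tstar M (by omega) _ _

lemma tmul_tstar_le (hM : tTr M ≤ 1) (i j : Fin n) : tmul M (tstar M) i j ≤ tstar M i j := by
  refine tmul_le_iff.2 fun q => ?_
  simp only [tstar, NNReal.mul_finset_sup]
  refine Finset.sup_le fun k hk => (le_tmul M (tpow M k) i j q).trans ?_
  rcases (Nat.succ_le_of_lt (mem_range.1 hk)).lt_or_eq with hlt | hkn
  · exact tpow_le_tstar M hlt i j
  · exact hkn ▸ tpow_card_le_tstar M hM i j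

lemma le_tmulVec_tstar (x : Fin n → ℝ≥0) : x ≤ tmulVec (tstar M) x := fun i =>
  calc x i ≤ tstar M i i * x i := le_mul_of_one_le_left zero_le (one_le_tstar M i)
    _ ≤ tmulVec (tstar M) x i := le_tmulVec _ _ _ _

lemma tmulVec_tstar_eq {x : Fin n → ℝ≥0} (hx : tmulVec M x ≤ x) : tmulVec (tstar M) x = x := by
  refine le_antisymm (tmulVec_le_iff.2 fun i j => ?_) (le_tmulVec_tstar M x)
  simp only [tstar, NNReal.finset_sup_mul]
  exact Finset.sup_le fun k _ => (le_tmulVec _ _ _ _).trans (tmulVec_tpow_le hx k i)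

theorem setOf_tmulVec_le_eq_range_tstar (hM : tTr M ≤ 1) :
    {x : Fin n → ℝ≥0 | (∀ i, 0 < x i) ∧ tmulVec M x ≤ x} =
      {x | ∃ u : Fin n → ℝ≥0, (∀ i, 0 < u i) ∧ x = tmulVec (tstar M) u} := by
  ext x
  constructor
  · rintro ⟨hx, hMx⟩
    exact ⟨x, hx, (tmulVec_tstar_eq M hMx).symm⟩
  · rintro ⟨u, hu, rfl⟩
    refine ⟨fun i => (hu i).trans_le (le_tmulVec_tstar M u i), ?_⟩
    rw [← tmulVec_tmul]
    exact tmulVec_mono_left (tmul_tstar_le M hM) u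

end KleeneStar

section Blocks

variable {n : ℕ}

noncomputable def tprodList : List (TMat n) → TMat n
  | [] => tId n
  | A :: l => tmul A (tprodList l)

lemma tprodList_append (l₁ l₂ : List (TMat n)) :
    tprodList (l₁ ++ l₂) = tmul (tprodList l₁) (tprodList l₂) := by
  induction l₁ with
  | nil => exact (tId_tmul _).symm
  | cons A l ih => rw [List.cons_append, tprodList, tprodList, ih, tmul_assoc]

lemma tchain_getElem (g : ℕ → TMat n) (l : List ℕ) :
    tchain l.length (fun t => g l[t]) = tprodList (l.map g) := by
  induction l with
  | nil => rfl
  | cons b l ih => exact congrArg (tmul (g b)) ih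

lemma exists_tpow_tadd_apply_le (D E : TMat n) (r : ℕ) (i j : Fin n) :
    ∃ (l : List ℕ) (a : ℕ), a + l.sum + l.length = r ∧
      tpow (tadd D E) r i j ≤
        tmul (tprodList (l.map fun b => tmul (tpow D b) E)) (tpow D a) i j := by
  induction r generalizing j with
  | zero => exact ⟨[], 0, rfl, le_of_eq (by rw [List.map_nil, tprodList, tId_tmul]; rfl)⟩
  | succ r ih =>
    obtain ⟨q, hq⟩ := exists_tmul_apply_eq (tpow (tadd D E) r) (tadd D E) i j
    obtain ⟨l, a, hr, hle⟩ := ih q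
    set X := tmul (tprodList (l.map fun b => tmul (tpow D b) E)) (tpow D a)
    rw [tpow_succ', hq]
    rcases le_total (E q j) (D q j) with hED | hDE
    · refine ⟨l, a + 1, by omega, ?_⟩
      calc tpow (tadd D E) r i q * tadd D E q j ≤ X i q * D q j :=
            mul_le_mul' hle (sup_le le_rfl hED)
        _ ≤ tmul X D i j := le_tmul _ _ _ _ _
        _ = _ := by rw [tpow_succ', tmul_assoc]
    · refine ⟨l ++ [a], 0, by simp; omega, ?_⟩
      calc tpow (tadd D E) r i q * tadd D E q j ≤ X i q * E q j :=
            mul_le_mul' hle (sup_le hDE le_rfl)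
        _ ≤ tmul X E i j := le_tmul _ _ _ _ _
        _ = _ := by
          rw [List.map_append, tprodList_append, List.map_singleton, tprodList, tprodList,
            tmul_tId, show tpow D 0 = tId n from rfl, tmul_tId, tmul_assoc]

lemma tpow_tadd_apply_self_le (D E : TMat n) (r : ℕ) (i : Fin n) :
    tpow (tadd D E) r i i ≤ ttr (tpow D r) ∨
      ∃ (k : ℕ) (f : Fin k → ℕ), 1 ≤ k ∧ k + ∑ t, f t = r ∧
        tpow (tadd D E) r i i ≤ ttr (tchain k fun t => tmul (tpow D (f t)) E) := by
  obtain ⟨l, a, hr, hle⟩ := exists_tpow_tadd_apply_le D E r i i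
  replace hle := hle.trans (le_ttr _ i)
  cases l with
  | nil =>
    left
    simpa [tprodList, tId_tmul, ← hr] using hle
  | cons b l =>
    right
    refine ⟨l.length + 1, Fin.cons (a + b) fun t => l[t], by omega, ?_, ?_⟩
    · rw [Fin.sum_cons]
      simp only [Fin.getElem_fin, Fin.sum_univ_getElem]
      simp only [List.sum_cons, List.length_cons] at hr
      omega
    · -- rotating the word cyclically merges the trailing `D^a` into the first block
      refine hle.trans_eq ?_
      rw [tchain, Fin.cons_zero]
      simp only [Fin.cons_succ]
      rw [tchain_getElem (fun b => tmul (tpow D b) E), List.map_cons, tprodList, ttr_tmul_comm,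
        ← tmul_assoc, ← tmul_assoc, ← tpow_add]

lemma exists_tchain_apply_le {ι : Type*} (k : ℕ) (F : Fin k → TMat n) (G : Fin k → ι → TMat n)
    (h : ∀ t x y, ∃ c, F t x y ≤ G t c x y) (i j : Fin n) :
    ∃ s : Fin k → ι, tchain k F i j ≤ tchain k (fun t => G t (s t)) i j := by
  induction k generalizing i with
  | zero => exact ⟨Fin.elim0, le_rfl⟩
  | succ k ih =>
    obtain ⟨q, hq⟩ := exists_tmul_apply_eq (F 0) (tchain k fun t => F t.succ) i j
    obtain ⟨c, hc⟩ := h 0 i q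
    obtain ⟨s, hs⟩ := ih (fun t => F t.succ) (fun t => G t.succ) (fun t => h t.succ) q
    refine ⟨Fin.cons c s, ?_⟩
    rw [tchain, hq, tchain, Fin.cons_zero]
    simp only [Fin.cons_succ]
    exact (mul_le_mul' hc hs).trans (le_tmul _ _ _ _ _)

lemma exists_tmul_tadd_apply_le (X P Q : TMat n) (x y : Fin n) :
    ∃ c : Fin 2, tmul X (tadd P Q) x y ≤
      tmul X (tmul (tpow P (c : ℕ)) (tpow Q (1 - (c : ℕ)))) x y := by
  rw [tmul_tadd]
  rcases le_total (tmul X P x y) (tmul X Q x y) with h | h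
  · refine ⟨0, ?_⟩
    simpa [tadd, tpow_one, tId_tmul, show tpow P 0 = tId n from rfl] using h
  · refine ⟨1, ?_⟩
    simpa [tadd, tpow_one, tmul_tId, show tpow Q 0 = tId n from rfl] using h

end Blocks

section ParameterBounds

lemma le_pow_of_rpow_one_div_le {x y : ℝ≥0} {k : ℕ} (hk : k ≠ 0)
    (h : x ^ ((1 : ℝ) / k) ≤ y) : x ≤ y ^ k := by
  rwa [one_div, NNReal.rpow_inv_le_iff (by positivity), NNReal.rpow_natCast] at h

lemma le_pow_mul_pow_of_rpow_mul_rpow_le {r a b : ℝ≥0} {l m : ℕ} (hl : l ≠ 0) (ha : a ≠ 0)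
    (h : r ^ ((1 : ℝ) / l) * a ^ (-(m : ℝ) / l) ≤ b) : r ≤ b ^ l * a ^ m := by
  have hl' : (l : ℝ) ≠ 0 := Nat.cast_ne_zero.2 hl
  have key : (r ^ ((1 : ℝ) / l) * a ^ (-(m : ℝ) / l)) ^ l = r * (a ^ m)⁻¹ := by
    rw [mul_pow, ← NNReal.rpow_natCast, ← NNReal.rpow_natCast (a ^ _), ← NNReal.rpow_mul,
      ← NNReal.rpow_mul, div_mul_cancel₀ _ hl', div_mul_cancel₀ _ hl', NNReal.rpow_one,
      NNReal.rpow_neg, NNReal.rpow_natCast]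
  have := pow_le_pow_left₀ zero_le h l
  rwa [key, mul_inv_le_iff₀ (pow_pos (pos_iff_ne_zero.2 ha) m)] at this

variable {n : ℕ}

lemma ttr_tpow_le_of_specRad_le {X : TMat n} {γ : ℝ≥0} (h : specRad X ≤ γ) {k : ℕ}
    (hk : k ∈ Icc 1 n) : ttr (tpow X k) ≤ γ ^ k :=
  le_pow_of_rpow_one_div_le (by grind) (Finset.sup_le_iff.1 h k hk)

lemma ttr_tchain_le_of_sigmaC_le {X C : TMat n} {γ : ℝ≥0} (hC : tTr C ≤ 1)
    (h : sigmaC X C ≤ γ) {k : ℕ} (f : Fin k → ℕ) (hk : 1 ≤ k) (hkn : k + ∑ t, f t ≤ n) :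
    ttr (tchain k fun t => tmul (tpow X (f t)) C) ≤ γ ^ ∑ t, f t := by
  rcases Nat.eq_zero_or_pos (∑ t, f t) with hm | hm
  · have hf : ∀ t, f t = 0 := fun t => sum_eq_zero_iff.1 hm t (mem_univ t)
    rw [hm, pow_zero]
    simp only [hf, show tpow X 0 = tId n from rfl, tId_tmul, tchain_const]
    exact (ttr_tpow_le_tTr C (mem_Icc.2 ⟨hk, by omega⟩)).trans hC
  · let f' : Fin k → Fin (∑ t, f t + 1) := fun t =>
      ⟨f t, Nat.lt_succ_of_le (single_le_sum (fun _ _ => zero_le) (mem_univ t))⟩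
    have hk' := Finset.sup_le_iff.1 h k (mem_Icc.2 ⟨hk, by omega⟩)
    have hm' := Finset.sup_le_iff.1 hk' _ (mem_Icc.2 ⟨hm, by omega⟩)
    exact le_pow_of_rpow_one_div_le hm.ne' <|
      Finset.sup_le_iff.1 hm' f' (mem_filter.2 ⟨mem_univ _, rfl⟩)

lemma rklm_le_of_Gfun_le {A B C : TMat n} {α β : ℝ≥0} (hα : α ≠ 0) (h : Gfun A B C α ≤ β)
    {k l m : ℕ} (hl : 1 ≤ l) (hlk : l ≤ k) (hm : 1 ≤ m) (hkm : k + m ≤ n) :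
    rklm A B C k l m ≤ β ^ l * α ^ m := by
  have hk := Finset.sup_le_iff.1 h k (mem_Icc.2 ⟨by omega, by omega⟩)
  have hm := Finset.sup_le_iff.1 hk m (mem_Icc.2 ⟨hm, by omega⟩)
  exact le_pow_mul_pow_of_rpow_mul_rpow_le (by omega) hα <|
    Finset.sup_le_iff.1 hm l (mem_Icc.2 ⟨hl, hlk⟩)

lemma ttr_tchain_le_rklm (A B C : TMat n) {k : ℕ} (f : Fin k → ℕ) (j : Fin k → Fin 2) :
    ttr (tchain k fun t => tmul (tpow A (f t)) (tmul (tpow B (j t)) (tpow C (1 - (j t : ℕ))))) ≤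
      rklm A B C k (∑ t, (j t : ℕ)) (∑ t, f t) := by
  let f' : Fin k → Fin (∑ t, f t + 1) := fun t =>
    ⟨f t, Nat.lt_succ_of_le (single_le_sum (fun _ _ => zero_le) (mem_univ t))⟩
  have hj : j ∈ binTuples k (∑ t, (j t : ℕ)) := mem_filter.2 ⟨mem_univ j, rfl⟩
  have hf' : f' ∈ tuples k (∑ t, f t) := mem_filter.2 ⟨mem_univ f', rfl⟩
  exact le_sup_of_le hf' (le_sup_of_le hj le_rfl)

end ParameterBounds

section TraceBounds

variable {n : ℕ}

lemma ttr_tchain_blocks_le {A B C : TMat n} {α β : ℝ≥0} (hα : α ≠ 0) (hC : tTr C ≤ 1)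
    (hσ : sigmaC A C ≤ α) (hG : Gfun A B C α ≤ β) {k : ℕ} (f : Fin k → ℕ) (j : Fin k → Fin 2)
    (hk : 1 ≤ k) (hm : 1 ≤ ∑ t, f t) (hkn : k + ∑ t, f t ≤ n) :
    ttr (tchain k fun t => tmul (tpow A (f t)) (tmul (tpow B (j t)) (tpow C (1 - (j t : ℕ))))) ≤
      α ^ (∑ t, f t) * β ^ (∑ t, (j t : ℕ)) := by
  rcases Nat.eq_zero_or_pos (∑ t, (j t : ℕ)) with hl | hl
  · have hj : ∀ t, j t = 0 := fun t => Fin.ext (sum_eq_zero_iff.1 hl t (mem_univ t))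
    rw [hl, pow_zero, mul_one]
    simp only [hj, Fin.val_zero, show tpow B 0 = tId n from rfl, tId_tmul, Nat.sub_zero, tpow_one]
    exact ttr_tchain_le_of_sigmaC_le hC hσ f hk hkn
  · have hlk : ∑ t, (j t : ℕ) ≤ k :=
      (sum_le_card_nsmul univ _ 1 fun t _ => Nat.lt_succ_iff.1 (j t).isLt).trans (by simp)
    calc _ ≤ rklm A B C k (∑ t, (j t : ℕ)) (∑ t, f t) := ttr_tchain_le_rklm A B C f j
      _ ≤ β ^ (∑ t, (j t : ℕ)) * α ^ (∑ t, f t) :=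
          rklm_le_of_Gfun_le hα hG hl hlk hm (by omega)
      _ = _ := mul_comm _ _

lemma tchain_tsmul_blocks (A B C : TMat n) (a b : ℝ≥0) {k : ℕ} (f : Fin k → ℕ)
    (j : Fin k → Fin 2) :
    tchain k (fun t => tmul (tpow (tsmul a A) (f t))
        (tmul (tpow (tsmul b B) (j t)) (tpow C (1 - (j t : ℕ))))) =
      tsmul (a ^ (∑ t, f t) * b ^ (∑ t, (j t : ℕ)))
        (tchain k fun t => tmul (tpow A (f t)) (tmul (tpow B (j t)) (tpow C (1 - (j t : ℕ))))) := by
  simp only [tpow_tsmul, tsmul_tmul, tmul_tsmul, tsmul_tsmul]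
  rw [tchain_tsmul, prod_mul_distrib, prod_pow_eq_pow_sum, prod_pow_eq_pow_sum, mul_comm]

lemma tchain_tsmul_tpow_tmul (X C : TMat n) (a : ℝ≥0) {k : ℕ} (f : Fin k → ℕ) :
    tchain k (fun t => tmul (tpow (tsmul a X) (f t)) C) =
      tsmul (a ^ ∑ t, f t) (tchain k fun t => tmul (tpow X (f t)) C) := by
  simp only [tpow_tsmul, tsmul_tmul]
  rw [tchain_tsmul, prod_pow_eq_pow_sum]

lemma ttr_tpow_tsmul_inv_le_one {X : TMat n} {γ : ℝ≥0} (h : specRad X ≤ γ) {r : ℕ}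
    (hr : r ∈ Icc 1 n) : ttr (tpow (tsmul γ⁻¹ X) r) ≤ 1 := by
  rw [tpow_tsmul, ttr_tsmul, inv_pow]
  exact inv_mul_le_one_of_le₀ (ttr_tpow_le_of_specRad_le h hr) zero_le

theorem tTr_tadd_tsmul_le_one {X C : TMat n} {γ : ℝ≥0} (hC : tTr C ≤ 1)
    (hX : specRad X ⊔ sigmaC X C ≤ γ) : tTr (tadd (tsmul γ⁻¹ X) C) ≤ 1 := by
  refine Finset.sup_le fun r hr => ttr_le_iff.2 fun i => ?_
  rcases tpow_tadd_apply_self_le (tsmul γ⁻¹ X) C r i with h | ⟨k, f, hk, hkr, h⟩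
  · exact h.trans (ttr_tpow_tsmul_inv_le_one (le_sup_left.trans hX) hr)
  · refine h.trans ?_
    rw [tchain_tsmul_tpow_tmul, ttr_tsmul, inv_pow]
    exact inv_mul_le_one_of_le₀ (ttr_tchain_le_of_sigmaC_le hC (le_sup_right.trans hX) f hk
      (by grind)) zero_le

lemma ttr_tchain_tmul_tadd_le_one {A B C : TMat n} {α β : ℝ≥0} (hα : α ≠ 0) (hC : tTr C ≤ 1)
    (hσ : sigmaC A C ≤ α) (hG : Gfun A B C α ≤ β) (hBC : tTr (tadd (tsmul β⁻¹ B) C) ≤ 1)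
    {k : ℕ} (f : Fin k → ℕ) (hk : 1 ≤ k) (hkn : k + ∑ t, f t ≤ n) :
    ttr (tchain k fun t => tmul (tpow (tsmul α⁻¹ A) (f t)) (tadd (tsmul β⁻¹ B) C)) ≤ 1 := by
  refine ttr_le_iff.2 fun i => ?_
  rcases Nat.eq_zero_or_pos (∑ t, f t) with hm | hm
  · have hf : ∀ t, f t = 0 := fun t => sum_eq_zero_iff.1 hm t (mem_univ t)
    simp only [hf, show tpow (tsmul α⁻¹ A) 0 = tId n from rfl, tId_tmul, tchain_const]
    exact (le_ttr _ i).trans <| (ttr_tpow_le_tTr _ (mem_Icc.2 ⟨hk, by omega⟩)).trans hBC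
  obtain ⟨j, hj⟩ := exists_tchain_apply_le k _
    (fun t (c : Fin 2) => tmul (tpow (tsmul α⁻¹ A) (f t))
      (tmul (tpow (tsmul β⁻¹ B) (c : ℕ)) (tpow C (1 - (c : ℕ)))))
    (fun t => exists_tmul_tadd_apply_le _ _ _) i i
  refine hj.trans ((le_ttr _ i).trans ?_)
  rw [tchain_tsmul_blocks, ttr_tsmul, inv_pow, inv_pow, ← mul_inv]
  exact inv_mul_le_one_of_le₀ (ttr_tchain_blocks_le hα hC hσ hG f j hk hm hkn) zero_le

theorem tTr_tadd_tadd_tsmul_le_one {A B C : TMat n} {α β : ℝ≥0} (hα : α ≠ 0)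
    (hC : tTr C ≤ 1) (h1 : specRad A ⊔ sigmaC A C ≤ α)
    (h2 : specRad B ⊔ sigmaC B C ⊔ Gfun A B C α ≤ β) :
    tTr (tadd (tadd (tsmul α⁻¹ A) (tsmul β⁻¹ B)) C) ≤ 1 := by
  have hBC : tTr (tadd (tsmul β⁻¹ B) C) ≤ 1 := tTr_tadd_tsmul_le_one hC (le_sup_left.trans h2)
  rw [tadd_assoc]
  refine Finset.sup_le fun r hr => ttr_le_iff.2 fun i => ?_
  rcases tpow_tadd_apply_self_le (tsmul α⁻¹ A) (tadd (tsmul β⁻¹ B) C) r i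
    with h | ⟨k, f, hk, hkr, h⟩
  · exact h.trans (ttr_tpow_tsmul_inv_le_one (le_sup_left.trans h1) hr)
  · exact h.trans (ttr_tchain_tmul_tadd_le_one hα hC (le_sup_right.trans h1)
      (le_sup_right.trans h2) hBC f hk (by grind))

end TraceBounds

/-- For Tr(C) ≤ 1 and α ≥ max(λ,σ), β ≥ max(μ,θ,G(α)), the positive solutions of the
system f_A(x) ≤ α, f_B(x) ≤ β, C ⊗ x ≤ x are exactly the vectors
(α⁻¹A ⊕ β⁻¹B ⊕ C)* ⊗ u with u positive. -/
theorem stmt16 {n : ℕ} (A B C : TMat n) (hC : tTr C ≤ 1)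
    (α β : ℝ≥0) (hα : 0 < α) (hβ : 0 < β)
    (h1 : specRad A ⊔ sigmaC A C ≤ α)
    (h2 : specRad B ⊔ sigmaC B C ⊔ Gfun A B C α ≤ β) :
    {x : Fin n → ℝ≥0 | (∀ i, 0 < x i) ∧ fobj A x ≤ α ∧ fobj B x ≤ β ∧ tmulVec C x ≤ x} =
      {x | ∃ u : Fin n → ℝ≥0, (∀ i, 0 < u i) ∧
        x = tmulVec (tstar (tadd (tadd (tsmul α⁻¹ A) (tsmul β⁻¹ B)) C)) u} := by
  rw [← setOf_tmulVec_le_eq_range_tstar _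
    (tTr_tadd_tadd_tsmul_le_one hα.ne' hC h1 h2)]
  ext x
  refine and_congr_right fun hx => ?_
  rw [tmulVec_tadd, tmulVec_tadd, sup_le_iff, sup_le_iff, fobj_le_iff hx hα.ne',
    fobj_le_iff hx hβ.ne', and_assoc]
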